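/- Let B = ⊕_{n≥0} B_n be an ℕ-graded bialgebra over a field k satisfying the twisting conditions, connected (B_0 = k·1) and generated in degree one (B_{n+1} = B_1·B_n as submodules for all n ≥ 0). Let {α_i : B → k}_{i∈ℤ} and {β_i : B → k}_{i∈ℤ} be families of linear functionals such that: α_i(1) = β_i(1) = 1 for all i; α_0 and β_0 agree with the counit ε on B_1; Σ α_i(x_1)β_i(x_2) = ε(x) = Σ β_i(x_1)α_i(x_2) for all x ∈ B_1 and all i; and for all i ∈ ℤ, x ∈ B_1, b ∈ B: α_i(x·b) = α_i(x)·(α_{i+1} * β_1)(b) and β_i(x·b) = β_i(x)·(α_1 * β_{i+1})(b). Then for every i ∈ ℤ, β_i is the convolution inverse of α_i (α_i * β_i = β_i * α_i = ε), and {α_i}_{i∈ℤ} is a system of twisting functionals on B. -/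

import Mathlib

open TensorProduct

/-- Convolution product of linear functionals on a coalgebra. -/
noncomputable def conv {k B : Type*} [CommSemiring k] [AddCommMonoid B] [Module k B]
    [Coalgebra k B] (f g : B →ₗ[k] k) : B →ₗ[k] k :=
  LinearMap.mul' k k ∘ₗ TensorProduct.map f g ∘ₗ Coalgebra.comul

/-- A system of twisting functionals on a ℤ-graded bialgebra `B`:
convolution-invertible linear functionals `α i` with `α i 1 = 1`, `α 0 = ε`, and
`Σ α_i(a b_1) α_j(b_2) = α_i(a) α_{i+j}(b)` for homogeneous `a` of degree `j`. -/
def IsTwistingFunctionalSystem {k B : Type*} [CommSemiring k] [Semiring B] [Bialgebra k B]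
    (𝒜 : ℤ → Submodule k B) (α : ℤ → (B →ₗ[k] k)) : Prop :=
  (∀ i : ℤ, ∃ αinv : B →ₗ[k] k, conv (α i) αinv = Coalgebra.counit ∧
    conv αinv (α i) = Coalgebra.counit) ∧
  (∀ i : ℤ, α i 1 = 1) ∧
  (α 0 = Coalgebra.counit) ∧
  (∀ (i j : ℤ), ∀ a ∈ 𝒜 j, ∀ b : B,
    conv ((α i) ∘ₗ LinearMap.mulLeft k a) (α j) b = α i a * α (i + j) b)

/-!
Since `Δ` preserves degrees and is multiplicative, the degree-one rules propagate through
convolution: for `x` of degree one and `c` of degree `n`,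
`(α_i * β_i)(x c) = (α_i * β_i)(x) · (α_{i+1} * β_1 * α_1 * β_{i+1})(c)`, and the middle factor
`β_1 * α_1` is already `ε` in degree `n`. Induction on the degree thus makes `β_i` the inverse of
`α_i`. The same collapse turns the degree-one rule into `α_i(a c) = α_i(a) (α_{i+n} * β_n)(c)` for
`a` of degree `n`; convolving with `α_n` then gives the twisting identity.
-/

open Coalgebra WithConv

section Coalgebra
variable {k B : Type*} [CommSemiring k] [AddCommMonoid B] [Module k B] [Coalgebra k B]

theorem conv_eq_ofConv_mul (f g : B →ₗ[k] k) : conv f g = (toConv f * toConv g).ofConv := rfl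

theorem counit_eq_ofConv_one : (counit : B →ₗ[k] k) = (1 : WithConv (B →ₗ[k] k)).ofConv := by
  ext; simp

theorem conv_assoc (f g h : B →ₗ[k] k) : conv (conv f g) h = conv f (conv g h) :=
  congrArg ofConv (mul_assoc (toConv f) (toConv g) (toConv h))

@[simp] theorem conv_counit (f : B →ₗ[k] k) : conv f counit = f := by
  rw [counit_eq_ofConv_one, conv_eq_ofConv_mul, toConv_ofConv, mul_one]

@[simp] theorem counit_conv (f : B →ₗ[k] k) : conv counit f = f := by
  rw [counit_eq_ofConv_one, conv_eq_ofConv_mul, toConv_ofConv, one_mul]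

theorem smul_conv (c : k) (f g : B →ₗ[k] k) : conv (c • f) g = c • conv f g :=
  congrArg ofConv (smul_mul_assoc c (toConv f) (toConv g))

def IsSubcoalgebra (N : Submodule k B) : Prop :=
  ∀ b ∈ N, comul (R := k) b ∈ LinearMap.range (mapIncl N N)

theorem conv_apply_eq_of_eqOn {N : Submodule k B} (hN : IsSubcoalgebra N) {f f' g g' : B →ₗ[k] k}
    (hf : ∀ x ∈ N, f x = f' x) (hg : ∀ y ∈ N, g y = g' y) {b : B} (hb : b ∈ N) :
    conv f g b = conv f' g' b := by
  obtain ⟨t, ht⟩ := hN b hb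
  have : map f g ∘ₗ mapIncl N N = map f' g' ∘ₗ mapIncl N N := by
    ext x y
    simp [mapIncl, hf x x.2, hg y y.2]
  simp only [conv, LinearMap.comp_apply, ← ht, ← LinearMap.comp_apply (map f g), this]

theorem conv_conv_conv_apply_of_eqOn_counit {N : Submodule k B} (hN : IsSubcoalgebra N)
    {f p q g : B →ₗ[k] k} (h : ∀ c ∈ N, conv p q c = counit (R := k) c) {b : B} (hb : b ∈ N) :
    conv (conv f p) (conv q g) b = conv f g b := by
  have hg : ∀ c ∈ N, conv (conv p q) g c = g c := fun c hc => by
    rw [conv_apply_eq_of_eqOn hN h (fun _ _ => rfl) hc, counit_conv]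
  rw [conv_assoc, ← conv_assoc p, conv_apply_eq_of_eqOn hN (fun _ _ => rfl) hg hb]

end Coalgebra

section Bialgebra
variable {k B : Type*} [CommSemiring k] [Semiring B] [Bialgebra k B]

theorem conv_apply_one (f g : B →ₗ[k] k) : conv f g 1 = f 1 * g 1 := by
  simp [conv, Algebra.TensorProduct.one_def]

theorem conv_comp_mulLeft {f F : B →ₗ[k] k} {a : B} (hf : ∀ c, f (a * c) = f a * F c)
    (g : B →ₗ[k] k) : conv (f ∘ₗ LinearMap.mulLeft k a) g = f a • conv F g := by
  rw [show f ∘ₗ LinearMap.mulLeft k a = f a • F from LinearMap.ext hf, smul_conv]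

theorem conv_apply_mul_eq_mul_conv {N : Submodule k B} (hN : IsSubcoalgebra N) {f g F G : B →ₗ[k] k}
    (hf : ∀ a ∈ N, ∀ c : B, f (a * c) = f a * F c) (hg : ∀ a ∈ N, ∀ c : B, g (a * c) = g a * G c)
    {a : B} (ha : a ∈ N) (c : B) :
    conv f g (a * c) = conv f g a * conv F G c := by
  have key : ∀ (t : N ⊗[k] N) (u : B ⊗[k] B), LinearMap.mul' k k (map f g (mapIncl N N t * u)) =
      LinearMap.mul' k k (map f g (mapIncl N N t)) * LinearMap.mul' k k (map F G u) := by
    intro t u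
    induction t using TensorProduct.induction_on with
    | zero => simp
    | add t t' ht ht' => simp only [map_add, add_mul, ht, ht']
    | tmul x y =>
      induction u using TensorProduct.induction_on with
      | zero => simp
      | add u u' hu hu' => simp only [mul_add, map_add, hu, hu']
      | tmul b b' =>
        simp only [mapIncl, map_tmul, Submodule.subtype_apply, Algebra.TensorProduct.tmul_mul_tmul,
          LinearMap.mul'_apply, hf x x.2, hg y y.2]
        ring
  obtain ⟨t, ht⟩ := hN a ha
  simp only [conv, LinearMap.comp_apply, Bialgebra.comul_mul, ← ht, key]

end Bialgebra

section Graded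
variable {k B : Type*} [CommSemiring k] [Semiring B] [Algebra k B] {𝒜 : ℤ → Submodule k B}

theorem LinearMap.ext_of_nonneg_degree [DirectSum.Decomposition 𝒜]
    (hneg : ∀ n : ℤ, n < 0 → 𝒜 n = ⊥) {M : Type*} [AddCommMonoid M] [Module k M] {f g : B →ₗ[k] M}
    (h : ∀ n : ℕ, ∀ b ∈ 𝒜 n, f b = g b) : f = g := by
  refine DirectSum.decompose_lhom_ext 𝒜 fun n => LinearMap.ext fun ⟨b, hb⟩ => ?_
  rcases lt_or_ge n 0 with hn | hn
  · rw [hneg n hn, Submodule.mem_bot] at hb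
    simp [hb]
  · obtain ⟨m, rfl⟩ := Int.eq_ofNat_of_zero_le hn
    exact h m b hb

theorem induction_on_degree (hconn : 𝒜 0 = Submodule.span k {(1 : B)})
    (hgen : ∀ n : ℤ, 0 ≤ n → 𝒜 (n + 1) = 𝒜 1 * 𝒜 n) {P : ℕ → B → Prop}
    (one : ∀ c : k, P 0 (c • 1)) (add : ∀ n a b, P n a → P n b → P n (a + b))
    (mul : ∀ n : ℕ, (∀ c ∈ 𝒜 n, P n c) → ∀ x ∈ 𝒜 1, ∀ c ∈ 𝒜 n, P (n + 1) (x * c)) :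
    ∀ n : ℕ, ∀ b ∈ 𝒜 n, P n b := by
  intro n
  induction n with
  | zero =>
    intro b hb
    obtain ⟨c, rfl⟩ := Submodule.mem_span_singleton.mp (hconn ▸ hb)
    exact one c
  | succ n ih =>
    intro b hb
    rw [Nat.cast_succ, hgen n n.cast_nonneg] at hb
    exact Submodule.mul_induction_on hb (mul n ih) (add (n + 1))

end Graded

section Twisting
variable {k B : Type*} [CommSemiring k] [Semiring B] [Bialgebra k B] {𝒜 : ℤ → Submodule k B}
  {α β : ℤ → (B →ₗ[k] k)}

theorem conv_eq_counit_of_generated [DirectSum.Decomposition 𝒜]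
    (hsub : ∀ n, IsSubcoalgebra (𝒜 n)) (hneg : ∀ n : ℤ, n < 0 → 𝒜 n = ⊥)
    (hconn : 𝒜 0 = Submodule.span k {(1 : B)})
    (hgen : ∀ n : ℤ, 0 ≤ n → 𝒜 (n + 1) = 𝒜 1 * 𝒜 n) (hone : ∀ i : ℤ, α i 1 = 1 ∧ β i 1 = 1)
    (hinv1 : ∀ i : ℤ, ∀ x ∈ 𝒜 1, conv (α i) (β i) x = counit (R := k) x ∧
      conv (β i) (α i) x = counit (R := k) x)
    (hrec : ∀ i : ℤ, ∀ x ∈ 𝒜 1, ∀ b : B,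
      α i (x * b) = α i x * conv (α (i + 1)) (β 1) b ∧
      β i (x * b) = β i x * conv (α 1) (β (i + 1)) b) (i : ℤ) :
    conv (α i) (β i) = counit ∧ conv (β i) (α i) = counit := by
  have hdeg := induction_on_degree hconn hgen
    (P := fun _ b => ∀ i, conv (α i) (β i) b = counit (R := k) b ∧
      conv (β i) (α i) b = counit (R := k) b)
    (fun c i => by simp [conv_apply_one, hone i])
    (fun _ a b ha hb i => by simp only [map_add, ha i, hb i, and_self])
    (fun n ih x hx c hc i => by
      have hα := fun a ha c => (hrec i a ha c).1
      have hβ := fun a ha c => (hrec i a ha c).2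
      constructor
      · rw [conv_apply_mul_eq_mul_conv (hsub 1) hα hβ hx, Bialgebra.counit_mul, (hinv1 i x hx).1,
          conv_conv_conv_apply_of_eqOn_counit (hsub n) (fun d hd => (ih d hd 1).2) hc,
          (ih c hc (i + 1)).1]
      · rw [conv_apply_mul_eq_mul_conv (hsub 1) hβ hα hx, Bialgebra.counit_mul, (hinv1 i x hx).2,
          conv_conv_conv_apply_of_eqOn_counit (hsub n) (fun d hd => (ih d hd (i + 1)).2) hc,
          (ih c hc 1).1])
  exact ⟨LinearMap.ext_of_nonneg_degree hneg fun n b hb => (hdeg n b hb i).1,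
    LinearMap.ext_of_nonneg_degree hneg fun n b hb => (hdeg n b hb i).2⟩

theorem eq_counit_of_generated [DirectSum.Decomposition 𝒜] (hneg : ∀ n : ℤ, n < 0 → 𝒜 n = ⊥)
    (hconn : 𝒜 0 = Submodule.span k {(1 : B)})
    (hgen : ∀ n : ℤ, 0 ≤ n → 𝒜 (n + 1) = 𝒜 1 * 𝒜 n) {f : B →ₗ[k] k} (h1 : f 1 = 1)
    (hdeg1 : ∀ x ∈ 𝒜 1, f x = counit (R := k) x)
    (hmul : ∀ x ∈ 𝒜 1, ∀ b : B, f (x * b) = f x * counit (R := k) b) : f = counit :=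
  LinearMap.ext_of_nonneg_degree hneg <| induction_on_degree hconn hgen
    (fun c => by simp [h1])
    (fun _ a b ha hb => by simp only [map_add, ha, hb])
    (fun _ _ x hx c _ => by rw [hmul x hx, hdeg1 x hx, Bialgebra.counit_mul])

theorem apply_mul_eq_mul_conv (hsub : ∀ n, IsSubcoalgebra (𝒜 n))
    (hconn : 𝒜 0 = Submodule.span k {(1 : B)})
    (hgen : ∀ n : ℤ, 0 ≤ n → 𝒜 (n + 1) = 𝒜 1 * 𝒜 n)
    (hone : ∀ i : ℤ, α i 1 = 1 ∧ β i 1 = 1) (hα0 : α 0 = counit) (hβ0 : β 0 = counit)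
    (hinv : ∀ i, conv (β i) (α i) = counit)
    (hrec : ∀ i : ℤ, ∀ x ∈ 𝒜 1, ∀ b : B,
      α i (x * b) = α i x * conv (α (i + 1)) (β 1) b ∧
      β i (x * b) = β i x * conv (α 1) (β (i + 1)) b) :
    ∀ n : ℕ, ∀ a ∈ 𝒜 n, ∀ i c, α i (a * c) = α i a * conv (α (i + n)) (β n) c ∧
      β i (a * c) = β i a * conv (α n) (β (i + n)) c := by
  refine induction_on_degree hconn hgen (fun c i b => by simp [hα0, hβ0, hone i])
    (fun _ a b ha hb i c => by simp only [add_mul, map_add, ha i c, hb i c, and_self]) ?_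
  intro n ih x hx a ha i c
  have hdeg : ((n + 1 : ℕ) : ℤ) = 1 + n := by push_cast; ring
  have hcollapse (j l : ℤ) : conv (conv (α j) (β n)) (conv (α n) (β l)) = conv (α j) (β l) := by
    rw [conv_assoc, ← conv_assoc (β n), hinv, counit_conv]
  constructor
  · rw [mul_assoc, (hrec i x hx _).1, (hrec i x hx _).1, mul_assoc,
      conv_apply_mul_eq_mul_conv (hsub n) (fun a ha c => (ih a ha (i + 1) c).1)
        (fun a ha c => (ih a ha 1 c).2) ha, hcollapse, hdeg, add_assoc]
  · rw [mul_assoc, (hrec i x hx _).2, (hrec i x hx _).2, mul_assoc,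
      conv_apply_mul_eq_mul_conv (hsub n) (fun a ha c => (ih a ha 1 c).1)
        (fun a ha c => (ih a ha (i + 1) c).2) ha, hcollapse, hdeg, add_assoc]

end Twisting

theorem statement6 {k B : Type*} [Field k] [Ring B] [Bialgebra k B]
    (𝒜 : ℤ → Submodule k B) [GradedAlgebra 𝒜]
    (hT2 : ∀ n : ℤ, ∀ b ∈ 𝒜 n,
      Coalgebra.comul (R := k) b ∈ LinearMap.range (TensorProduct.mapIncl (𝒜 n) (𝒜 n)))
    (hneg : ∀ n : ℤ, n < 0 → 𝒜 n = ⊥)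
    (hconn : 𝒜 0 = Submodule.span k {(1 : B)})
    (hgen : ∀ n : ℤ, 0 ≤ n → 𝒜 (n + 1) = 𝒜 1 * 𝒜 n)
    (α β : ℤ → (B →ₗ[k] k))
    (hone : ∀ i : ℤ, α i 1 = 1 ∧ β i 1 = 1)
    (hzero : ∀ x ∈ 𝒜 1, α 0 x = Coalgebra.counit (R := k) x ∧
      β 0 x = Coalgebra.counit (R := k) x)
    (hinv1 : ∀ i : ℤ, ∀ x ∈ 𝒜 1, conv (α i) (β i) x = Coalgebra.counit (R := k) x ∧
      conv (β i) (α i) x = Coalgebra.counit (R := k) x)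
    (hrec : ∀ i : ℤ, ∀ x ∈ 𝒜 1, ∀ b : B,
      α i (x * b) = α i x * conv (α (i + 1)) (β 1) b ∧
      β i (x * b) = β i x * conv (α 1) (β (i + 1)) b) :
    (∀ i : ℤ, conv (α i) (β i) = Coalgebra.counit ∧ conv (β i) (α i) = Coalgebra.counit) ∧
    IsTwistingFunctionalSystem 𝒜 α := by
  have hinv := conv_eq_counit_of_generated hT2 hneg hconn hgen hone hinv1 hrec
  have hα0 : α 0 = counit := eq_counit_of_generated hneg hconn hgen (hone 0).1
    (fun x hx => (hzero x hx).1)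
    (fun x hx b => by rw [(hrec 0 x hx b).1, zero_add, (hinv 1).1])
  have hβ0 : β 0 = counit := by rw [← (hinv 0).1, hα0, counit_conv]
  have hmul := apply_mul_eq_mul_conv hT2 hconn hgen hone hα0 hβ0 (fun i => (hinv i).2) hrec
  refine ⟨hinv, fun i => ⟨β i, hinv i⟩, fun i => (hone i).1, hα0, fun i j a ha b => ?_⟩
  rcases lt_or_ge j 0 with hj | hj
  · rw [hneg j hj, Submodule.mem_bot] at ha
    subst ha
    rw [conv_comp_mulLeft (F := 0) (by simp)]
    simp
  · obtain ⟨n, rfl⟩ := Int.eq_ofNat_of_zero_le hj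
    rw [conv_comp_mulLeft (fun c => (hmul n a ha i c).1), conv_assoc, (hinv n).2, conv_counit]
    rfl
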